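/- For every integer m ≥ 0 and every real s with |s| < 1, the generating function of the coefficients h_{m,n} satisfies ∑_{n≥0} h_{m,n} · s^n = 1 / (2·√(1−s)·(3 − 3s + s²)^{m+1}). -/

import Mathlib

/-- The coefficient
`h_{m,n} = (1/(2·3^{m+1})) ∑_{j=0}^{⌊n/2⌋} C(m+j,m)·Γ(m+n−j+3/2)/((n−2j)!·Γ(j+m+3/2))·(−1/3)^j`. -/
noncomputable def airyCoeffH (m n : ℕ) : ℝ :=
  (1 / (2 * 3 ^ (m + 1))) *
    ∑ j ∈ Finset.range (n / 2 + 1),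
      (Nat.choose (m + j) m : ℝ) * Real.Gamma ((m : ℝ) + n - j + 3 / 2) /
        ((Nat.factorial (n - 2 * j) : ℝ) * Real.Gamma ((j : ℝ) + m + 3 / 2)) *
        (-1 / 3 : ℝ) ^ j

/-!
Since `3 - 3s + s² = 3(1 - s)(1 + s²/(3(1 - s)))`, the right-hand side equals
`(2·3^{m+1})⁻¹ (1 - s)^{-(m+3/2)} (1 + s²/(3(1 - s)))^{-(m+1)}`. Expanding the last factor as a
negative binomial series in `s²/(3(1 - s))`, and then each resulting `(1 - s)^{-(j+m+3/2)}` by the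
binomial series, gives a double series in `(j, k)` which converges absolutely for `|s| < 1/2`;
grouping its terms by `n = 2j + k` produces `h_{m,n} sⁿ`. This identifies `∑ h_{m,n} zⁿ` as the
Taylor series at `0` of the complex function `1 / (2 √(1 - z) (3 - 3z + z²)^{m+1})`, which is
holomorphic on the unit disc, so the series converges to it on the whole disc.
-/

open Finset
open scoped Nat NNReal ENNReal

theorem Ring.choose_add_natCast_sub_one_eq_Gamma {a : ℂ} (ha : ∀ k : ℕ, a ≠ -k) (n : ℕ) :
    Ring.choose (a + n - 1) n = Complex.Gamma (a + n) / (n ! * Complex.Gamma a) := by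
  have h := Ring.factorial_nsmul_multichoose_eq_ascPochhammer a n
  rw [Polynomial.ascPochhammer_smeval_eq_eval, ← Complex.Gamma_add_nat_div_Gamma_eq a ha,
    nsmul_eq_mul] at h
  rw [← Ring.multichoose_eq, mul_comm, ← div_div, ← h,
    mul_div_cancel_left₀ _ (by exact_mod_cast n.factorial_ne_zero)]

theorem Complex.hasSum_Gamma_div_mul_pow {a : ℂ} (ha : ∀ k : ℕ, a ≠ -k) {z : ℂ} (hz : ‖z‖ < 1) :
    HasSum (fun n : ℕ => Gamma (a + n) / (n ! * Gamma a) * z ^ n) (1 / (1 - z) ^ a) := by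
  have h := (one_div_one_sub_cpow_hasFPowerSeriesOnBall_zero a).hasSum
    (y := z) (by simpa [enorm_eq_nnnorm, ← NNReal.coe_lt_one] using hz)
  simpa [FormalMultilinearSeries.ofScalars_apply_eq, Ring.choose_add_natCast_sub_one_eq_Gamma ha,
    mul_comm] using h

theorem norm_mul_sq_div_one_sub_lt_one {c z : ℂ} (hz : ‖z‖ < 1)
    (hcz : ‖c‖ * ‖z‖ ^ 2 / (1 - ‖z‖) < 1) : ‖c * z ^ 2 / (1 - z)‖ < 1 := by
  refine lt_of_le_of_lt ?_ hcz
  rw [norm_div, norm_mul, norm_pow]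
  have h1 : 1 - ‖z‖ ≤ ‖1 - z‖ := by simpa using norm_sub_norm_le (1 : ℂ) z
  gcongr

section NestedBinomial

variable (m : ℕ) (b : ℝ)

/-- The `(j, k)` term of `(1 - z)^{-b} (1 - c z²/(1 - z))^{-(m+1)}` expanded first in powers of
`c z²/(1 - z)` and then each `(1 - z)^{-(j+b)}` in powers of `z`. -/
noncomputable def nestedBinomialTerm (c z : ℂ) (p : ℕ × ℕ) : ℂ :=
  (m + p.1).choose m * c ^ p.1 * z ^ (2 * p.1) *
    (((Real.Gamma (p.1 + b + p.2) / (p.2 ! * Real.Gamma (p.1 + b)) : ℝ) : ℂ) * z ^ p.2)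

variable {m b}

theorem norm_nestedBinomialTerm (hb : 0 < b) (c z : ℂ) (p : ℕ × ℕ) :
    (‖nestedBinomialTerm m b c z p‖ : ℂ) = nestedBinomialTerm m b ‖c‖ ‖z‖ p := by
  have : 0 ≤ Real.Gamma (p.1 + b + p.2) / (p.2 ! * Real.Gamma (p.1 + b)) := by
    have := Real.Gamma_pos_of_pos (show 0 < (p.1 : ℝ) + b by positivity)
    have := Real.Gamma_pos_of_pos (show 0 < (p.1 : ℝ) + b + p.2 by positivity)
    positivity
  simp only [nestedBinomialTerm, norm_mul, norm_pow, Complex.norm_real, Complex.norm_natCast,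
    Real.norm_of_nonneg this]
  push_cast
  ring

theorem hasSum_nestedBinomialTerm_fiber (hb : 0 < b) (c : ℂ) {z : ℂ} (hz : ‖z‖ < 1) (j : ℕ) :
    HasSum (fun k => nestedBinomialTerm m b c z (j, k))
      ((m + j).choose m * c ^ j * z ^ (2 * j) * (1 / (1 - z) ^ ((j + b : ℝ) : ℂ))) := by
  have ha (k : ℕ) : ((j + b : ℝ) : ℂ) ≠ -k := by
    rw [← Complex.ofReal_natCast, ← Complex.ofReal_neg, Ne, Complex.ofReal_inj]
    linarith [(k.cast_nonneg : (0 : ℝ) ≤ k), (j.cast_nonneg : (0 : ℝ) ≤ j)]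
  refine ((Complex.hasSum_Gamma_div_mul_pow ha hz).mul_left _).congr_fun fun k => ?_
  simp only [nestedBinomialTerm]
  push_cast [← Complex.Gamma_ofReal]
  ring

variable (b) in
theorem hasSum_nestedBinomialTerm_outer {c z : ℂ} (hz : ‖z‖ < 1)
    (hcz : ‖c‖ * ‖z‖ ^ 2 / (1 - ‖z‖) < 1) :
    HasSum (fun j : ℕ => (m + j).choose m * c ^ j * z ^ (2 * j) * (1 / (1 - z) ^ ((j + b : ℝ) : ℂ)))
      (1 / ((1 - z) ^ (b : ℂ) * (1 - c * z ^ 2 / (1 - z)) ^ (m + 1))) := by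
  have hz1 : 1 - z ≠ 0 := sub_ne_zero.mpr (ne_of_apply_ne norm (by rw [norm_one]; exact hz.ne'))
  have h := (hasSum_choose_mul_geometric_of_norm_lt_one m
    (norm_mul_sq_div_one_sub_lt_one hz hcz)).mul_left (1 / (1 - z) ^ (b : ℂ))
  rw [one_div_mul_one_div] at h
  refine h.congr_fun fun j => ?_
  rw [Complex.ofReal_add, Complex.ofReal_natCast, Complex.cpow_add _ _ hz1, Complex.cpow_natCast,
    add_comm j m, div_pow, mul_pow, ← pow_mul]
  field_simp

theorem summable_norm_nestedBinomialTerm (hb : 0 < b) {c z : ℂ} (hz : ‖z‖ < 1)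
    (hcz : ‖c‖ * ‖z‖ ^ 2 / (1 - ‖z‖) < 1) :
    Summable fun p => ‖nestedBinomialTerm m b c z p‖ := by
  have hz' : ‖(‖z‖ : ℂ)‖ < 1 := by simpa using hz
  have hcz' : ‖(‖c‖ : ℂ)‖ * ‖(‖z‖ : ℂ)‖ ^ 2 / (1 - ‖(‖z‖ : ℂ)‖) < 1 := by simpa using hcz
  have hfiber j := hasSum_nestedBinomialTerm_fiber (m := m) hb ‖c‖ hz' j
  simp only [← norm_nestedBinomialTerm hb] at hfiber
  refine (summable_prod_of_nonneg fun _ => norm_nonneg _).mpr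
    ⟨fun j => Complex.summable_ofReal.mp (hfiber j).summable, ?_⟩
  refine Complex.summable_ofReal.mp
    ((hasSum_nestedBinomialTerm_outer (m := m) b hz' hcz').summable.congr fun j => ?_)
  rw [Complex.ofReal_tsum, (hfiber j).tsum_eq]

theorem hasSum_nestedBinomialTerm (hb : 0 < b) {c z : ℂ} (hz : ‖z‖ < 1)
    (hcz : ‖c‖ * ‖z‖ ^ 2 / (1 - ‖z‖) < 1) :
    HasSum (nestedBinomialTerm m b c z)
      (1 / ((1 - z) ^ (b : ℂ) * (1 - c * z ^ 2 / (1 - z)) ^ (m + 1))) := by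
  have hT := (summable_norm_nestedBinomialTerm (m := m) hb hz hcz).of_norm.hasSum
  rwa [(hT.prod_fiberwise (hasSum_nestedBinomialTerm_fiber hb c hz)).unique
    (hasSum_nestedBinomialTerm_outer b hz hcz)] at hT

end NestedBinomial

def sigmaFinDivTwoEquiv : (Σ n : ℕ, Fin (n / 2 + 1)) ≃ ℕ × ℕ where
  toFun x := (x.2, x.1 - 2 * x.2)
  invFun p := ⟨2 * p.1 + p.2, ⟨p.1, by omega⟩⟩
  left_inv := by
    rintro ⟨n, j, hj⟩
    have hn : 2 * j + (n - 2 * j) = n := by omega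
    exact Sigma.ext hn ((Fin.heq_ext_iff (by simp only [hn])).mpr rfl)
  right_inv := by
    rintro ⟨j, k⟩
    simp

theorem HasSum.sum_fiberwise_two_mul_add {α : Type*} [AddCommMonoid α] [TopologicalSpace α]
    [ContinuousAdd α] [RegularSpace α] {f : ℕ × ℕ → α} {a : α} (h : HasSum f a) :
    HasSum (fun n => ∑ j ∈ range (n / 2 + 1), f (j, n - 2 * j)) a :=
  (sigmaFinDivTwoEquiv.hasSum_iff.mpr h).sigma fun n => by
    rw [← Fin.sum_univ_eq_sum_range (fun j => f (j, n - 2 * j))]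
    exact hasSum_fintype _

theorem FormalMultilinearSeries.hasFPowerSeriesOnBall_ofScalars {𝕜 : Type*} [RCLike 𝕜]
    {c : ℕ → 𝕜} {f : 𝕜 → 𝕜} {r : ℝ≥0} (hr : 0 < r)
    (h : ∀ z : 𝕜, ‖z‖ < r → HasSum (fun n => c n * z ^ n) (f z)) :
    HasFPowerSeriesOnBall f (ofScalars 𝕜 c) 0 r where
  r_le := ENNReal.le_of_forall_nnreal_lt fun r' hr' => by
    have hsum := h (r' : ℝ) (by simpa using hr')
    refine (ofScalars 𝕜 c).le_radius_of_tendsto (l := 0) ?_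
    simpa [ofScalars_norm] using hsum.summable.tendsto_atTop_zero.norm
  r_pos := by simpa using hr
  hasSum {y} hy := by
    simpa [ofScalars_apply_eq, mul_comm] using h y (by simpa [enorm_eq_nnnorm] using hy)

theorem HasFPowerSeriesAt.hasFPowerSeriesOnBall_of_differentiableOn {E : Type*}
    [NormedAddCommGroup E] [NormedSpace ℂ E] [CompleteSpace E] {f : ℂ → E}
    {p : FormalMultilinearSeries ℂ ℂ E} {c : ℂ} {R : ℝ≥0} (hp : HasFPowerSeriesAt f p c)
    (hf : DifferentiableOn ℂ f (Metric.ball c R)) (hR : 0 < R) :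
    HasFPowerSeriesOnBall f p c R := by
  obtain ⟨r, hr⟩ := hp
  have hsmaller (r' : ℝ≥0) (h0 : 0 < r') (hr' : r' < R) : HasFPowerSeriesOnBall f p c r' :=
    hr.exchange_radius ((hf.mono (Metric.closedBall_subset_ball hr')).hasFPowerSeriesOnBall h0)
  refine ⟨ENNReal.le_of_forall_pos_nnreal_lt fun r' h0 hr' => ?_, by simpa using hR,
    fun {y} hy => ?_⟩
  · exact (hsmaller r' h0 (by exact_mod_cast hr')).r_le
  · obtain ⟨r', hyr', hr'⟩ := exists_between
      (show ‖y‖₊ < R by simpa [enorm_eq_nnnorm, ← NNReal.coe_lt_coe] using hy)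
    exact (hsmaller r' (pos_of_gt hyr') hr').hasSum
      (by simpa [enorm_eq_nnnorm, ← NNReal.coe_lt_coe] using hyr')

noncomputable def airyGenFun (m : ℕ) (z : ℂ) : ℂ :=
  1 / (2 * (1 - z) ^ (1 / 2 : ℂ) * (3 - 3 * z + z ^ 2) ^ (m + 1))

theorem three_sub_three_mul_add_sq_ne_zero {z : ℂ} (hz : ‖z‖ < 1) : 3 - 3 * z + z ^ 2 ≠ 0 := by
  -- its real part is `3 - 3x + x² - y² > 2 - 3x + 2x² > 0` when `x² + y² < 1`
  intro h
  have hre := congrArg Complex.re h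
  have hdisc : z.re * z.re + z.im * z.im < 1 := by
    rw [← Complex.normSq_apply, ← Complex.sq_norm]
    nlinarith [norm_nonneg z]
  simp only [pow_two, Complex.add_re, Complex.sub_re, Complex.mul_re, Complex.re_ofNat,
    Complex.im_ofNat, Complex.zero_re] at hre
  nlinarith

theorem differentiableOn_airyGenFun (m : ℕ) :
    DifferentiableOn ℂ (airyGenFun m) (Metric.ball 0 1) := by
  intro z hz
  rw [mem_ball_zero_iff] at hz
  have hslit : 1 - z ∈ Complex.slitPlane := by
    simpa [sub_eq_add_neg] using Complex.mem_slitPlane_of_norm_lt_one (z := -z) (by simpa using hz)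
  have hden : 2 * (1 - z) ^ (1 / 2 : ℂ) * (3 - 3 * z + z ^ 2) ^ (m + 1) ≠ 0 := by
    have := three_sub_three_mul_add_sq_ne_zero hz
    have := Complex.slitPlane_ne_zero hslit
    simp_all [Complex.cpow_eq_zero_iff]
  refine DifferentiableAt.differentiableWithinAt ?_
  unfold airyGenFun
  fun_prop (disch := assumption)

theorem airyGenFun_eq (m : ℕ) {z : ℂ} (hz : z ≠ 1) :
    airyGenFun m z = 1 / (2 * 3 ^ (m + 1)) *
      (1 / ((1 - z) ^ ((m + 3 / 2 : ℝ) : ℂ) * (1 - -1 / 3 * z ^ 2 / (1 - z)) ^ (m + 1))) := by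
  have hz1 : 1 - z ≠ 0 := sub_ne_zero.mpr hz.symm
  have hsplit : (1 - z) ^ ((m + 3 / 2 : ℝ) : ℂ) = (1 - z) ^ (m + 1) * (1 - z) ^ (1 / 2 : ℂ) := by
    rw [← Complex.cpow_natCast, ← Complex.cpow_add _ _ hz1]
    push_cast
    ring_nf
  have hfrac : 1 - -1 / 3 * z ^ 2 / (1 - z) = (3 - 3 * z + z ^ 2) / (3 * (1 - z)) := by
    field_simp
    ring
  rw [hsplit, hfrac, airyGenFun, div_pow, mul_pow]
  field_simp

theorem airyCoeffH_mul_pow (m n : ℕ) (z : ℂ) :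
    (airyCoeffH m n : ℂ) * z ^ n = ∑ j ∈ range (n / 2 + 1),
      1 / (2 * 3 ^ (m + 1)) * nestedBinomialTerm m (m + 3 / 2) (-1 / 3) z (j, n - 2 * j) := by
  rw [airyCoeffH, Complex.ofReal_mul, Complex.ofReal_sum, mul_assoc, sum_mul, mul_sum]
  refine sum_congr rfl fun j hj => ?_
  have hj : 2 * j ≤ n := by rw [mem_range] at hj; omega
  have harg : (j : ℝ) + (m + 3 / 2) + (n - 2 * j : ℕ) = m + n - j + 3 / 2 := by
    rw [Nat.cast_sub hj]; push_cast; ring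
  have hpow : z ^ n = z ^ (2 * j) * z ^ (n - 2 * j) := by rw [← pow_add, Nat.add_sub_cancel' hj]
  rw [nestedBinomialTerm, harg, ← add_assoc, hpow]
  push_cast
  ring

theorem hasSum_airyCoeffH_mul_pow_of_norm_lt_half (m : ℕ) {z : ℂ} (hz : ‖z‖ < 1 / 2) :
    HasSum (fun n => (airyCoeffH m n : ℂ) * z ^ n) (airyGenFun m z) := by
  have hz1 : ‖z‖ < 1 := by linarith
  have hcz : ‖(-1 / 3 : ℂ)‖ * ‖z‖ ^ 2 / (1 - ‖z‖) < 1 := by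
    rw [div_lt_one (by linarith)]
    norm_num
    nlinarith [norm_nonneg z]
  rw [airyGenFun_eq m (ne_of_apply_ne norm (by rw [norm_one]; exact hz1.ne))]
  simpa only [airyCoeffH_mul_pow] using
    ((hasSum_nestedBinomialTerm (m := m) (by positivity) hz1 hcz).mul_left
      (1 / (2 * 3 ^ (m + 1)))).sum_fiberwise_two_mul_add

theorem hasSum_airyCoeffH_mul_pow (m : ℕ) {z : ℂ} (hz : ‖z‖ < 1) :
    HasSum (fun n => (airyCoeffH m n : ℂ) * z ^ n) (airyGenFun m z) := by
  have hsmall := FormalMultilinearSeries.hasFPowerSeriesOnBall_ofScalars (r := 1 / 2)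
    (by norm_num) fun z hz => hasSum_airyCoeffH_mul_pow_of_norm_lt_half m (by simpa using hz)
  have hdisc := hsmall.hasFPowerSeriesAt.hasFPowerSeriesOnBall_of_differentiableOn
    (R := 1) (by simpa using differentiableOn_airyGenFun m) one_pos
  simpa [FormalMultilinearSeries.ofScalars_apply_eq, mul_comm, enorm_eq_nnnorm] using
    hdisc.hasSum (y := z) (by simpa [enorm_eq_nnnorm, ← NNReal.coe_lt_coe] using hz)

theorem airyGenFun_ofReal (m : ℕ) {s : ℝ} (hs : s ≤ 1) :
    airyGenFun m s = ((1 / (2 * √(1 - s) * (3 - 3 * s + s ^ 2) ^ (m + 1)) : ℝ) : ℂ) := by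
  have hsqrt : (1 - (s : ℂ)) ^ (1 / 2 : ℂ) = ((√(1 - s) : ℝ) : ℂ) := by
    rw [Real.sqrt_eq_rpow, Complex.ofReal_cpow (by linarith)]
    push_cast
    ring_nf
  rw [airyGenFun, hsqrt]
  push_cast
  ring

theorem airyCoeffH_generating_function (m : ℕ) (s : ℝ) (hs : |s| < 1) :
    ∑' n : ℕ, airyCoeffH m n * s ^ n
      = 1 / (2 * Real.sqrt (1 - s) * (3 - 3 * s + s ^ 2) ^ (m + 1)) := by
  have h := hasSum_airyCoeffH_mul_pow m (z := s) (by simpa using hs)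
  rw [airyGenFun_ofReal m (abs_lt.mp hs).2.le] at h
  exact (Complex.hasSum_ofReal.mp (by exact_mod_cast h)).tsum_eq
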